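/- arXiv:2304.06379 — 5 statements merged into one kernel-verified Lean document; each statement's English description precedes it below -/
import Mathlib

section
/- Let V : ℝ^n → ℝ be C¹ on a convex compact set Ω = [-a,a]^n containing 0, with ℝ^n partitioned into s blocks. For j ∈ {1,…,s} define V_j(x) = V(x) - V(Π_{\{j\}} x), where Π_{\{j\}} zeroes block j. Suppose there is a strictly decreasing γ̃ : ℝ_{≥0} → ℝ_{≥0} with γ̃ → 0 such that for all i ≠ j and all x ∈ Ω, the operator norm of the partial derivative of V_j with respect to block x_i is at most γ̃(d(i,j)), where d is a metric-like distance on {1,…,s}. Then for every j, l ∈ {1,…,s} and x ∈ Ω, |V_j(Π^{j-1} P_{B_l(j)} x) - V_j(Π^{j-1} x)| ≤ s · (max_{z∈Ω} ‖z‖) · γ̃(l+1), where B_l(j) = {i : d(i,j) ≤ l}, P_{B_l(j)} zeroes all blocks outside B_l(j), and Π^{j-1} zeroes blocks 1,…,j-1. -/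
/-- Lemma 1: decaying block-sensitivity implies the separability error bound.
The state space is `∏ i, ℝ^{n i}` with `s` blocks, `Ω = [-a,a]^n`,
`V_j(x) = V(x) - V(x with block j set to 0)`, and the sensitivity
`∂V_j/∂x_i` decays like `γ̃(d(i,j))`.  Then replacing `x` by its projection onto
the neighborhood `B_l(j) = {i : d(i,j) ≤ l}` (and zeroing the first `j-1` blocks)
changes `V_j` by at most `s · (max_{z∈Ω} ‖z‖) · γ̃(l+1)`. -/
theorem stmt_5 {s : ℕ} {n : Fin s → ℕ} (a : ℝ) (ha : 0 < a)
    (Ω : Set ((i : Fin s) → EuclideanSpace ℝ (Fin (n i))))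
    (hΩ : Ω = {x | ∀ (i : Fin s) (k : Fin (n i)), |x i k| ≤ a})
    (V : ((i : Fin s) → EuclideanSpace ℝ (Fin (n i))) → ℝ)
    (hV : ContDiff ℝ 1 V)
    (d : Fin s → Fin s → ℕ)
    (hd_refl : ∀ i, d i i = 0) (hd_symm : ∀ i j, d i j = d j i)
    (hd_tri : ∀ i j k, d i k ≤ d i j + d j k)
    (γ : ℝ → ℝ) (hγ_nonneg : ∀ t, 0 ≤ t → 0 ≤ γ t)
    (hγ_anti : StrictAntiOn γ (Set.Ici 0))
    (hγ_lim : Filter.Tendsto γ Filter.atTop (nhds 0))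
    (hsens : ∀ i j : Fin s, i ≠ j → ∀ x ∈ Ω,
      ‖(fderiv ℝ (fun y => V y - V (Function.update y j 0)) x).comp
          (LinearMap.toContinuousLinearMap
            (LinearMap.single ℝ (fun i => EuclideanSpace ℝ (Fin (n i))) i))‖
        ≤ γ (d i j)) :
    ∀ (j : Fin s) (l : ℕ), 1 ≤ l → l ≤ s → ∀ x ∈ Ω,
      |(fun y => V y - V (Function.update y j 0))
          (fun i => if (i : ℕ) < (j : ℕ) then 0 else if d i j ≤ l then x i else 0)
        - (fun y => V y - V (Function.update y j 0))
          (fun i => if (i : ℕ) < (j : ℕ) then 0 else x i)|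
      ≤ (s : ℝ) * sSup ((fun z => ‖z‖) '' Ω) * γ ((l : ℝ) + 1) := by
  intro j l hl1 hls x hx
  set z : (i : Fin s) → EuclideanSpace ℝ (Fin (n i)) :=
    (fun i => if (i : ℕ) < (j : ℕ) then 0 else if d i j ≤ l then x i else 0) with hzdef
  set y : (i : Fin s) → EuclideanSpace ℝ (Fin (n i)) :=
    (fun i => if (i : ℕ) < (j : ℕ) then 0 else x i) with hydef
  set f : ((i : Fin s) → EuclideanSpace ℝ (Fin (n i))) → ℝ :=
    (fun y => V y - V (Function.update y j 0)) with hfdef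
  set M : ℝ := sSup ((fun z => ‖z‖) '' Ω) with hMdef
  -- basic facts about Ω and M
  have hxΩ : ∀ (i : Fin s) (k : Fin (n i)), |x i k| ≤ a := by
    rw [hΩ] at hx; exact hx
  have hyP : ∀ i : Fin s, (i : ℕ) < (j : ℕ) → y i = 0 := fun i h => by
    rw [hydef]; exact if_pos h
  have hyN : ∀ i : Fin s, ¬(i : ℕ) < (j : ℕ) → y i = x i := fun i h => by
    rw [hydef]; exact if_neg h
  have hzP : ∀ i : Fin s, (i : ℕ) < (j : ℕ) → z i = 0 := fun i h => by
    rw [hzdef]; exact if_pos h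
  have hzN1 : ∀ i : Fin s, ¬(i : ℕ) < (j : ℕ) → d i j ≤ l → z i = x i := fun i h h2 => by
    rw [hzdef]; exact (if_neg h).trans (if_pos h2)
  have hzN2 : ∀ i : Fin s, ¬(i : ℕ) < (j : ℕ) → ¬d i j ≤ l → z i = 0 := fun i h h2 => by
    rw [hzdef]; exact (if_neg h).trans (if_neg h2)
  have hbdd : BddAbove ((fun z => ‖z‖) '' Ω) := by
    refine ⟨Real.sqrt ((Finset.univ.sup n : ℕ) : ℝ) * a, ?_⟩
    rintro _ ⟨w, hw, rfl⟩
    rw [hΩ] at hw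
    have h0 : (0:ℝ) ≤ Real.sqrt ((Finset.univ.sup n : ℕ) : ℝ) * a :=
      mul_nonneg (Real.sqrt_nonneg _) ha.le
    refine (pi_norm_le_iff_of_nonneg h0).mpr fun i => ?_
    rw [EuclideanSpace.norm_eq]
    have h1 : ∑ k, ‖w i k‖ ^ 2 ≤ ∑ _k : Fin (n i), a ^ 2 := by
      refine Finset.sum_le_sum fun k _ => ?_
      have : ‖w i k‖ ≤ a := by rw [Real.norm_eq_abs]; exact hw i k
      exact pow_le_pow_left₀ (norm_nonneg _) this 2
    calc Real.sqrt (∑ k, ‖w i k‖ ^ 2) ≤ Real.sqrt (∑ _k : Fin (n i), a ^ 2) :=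
          Real.sqrt_le_sqrt h1
      _ = Real.sqrt ((n i : ℝ) * a ^ 2) := by simp [Finset.sum_const, mul_comm]
      _ = Real.sqrt (n i) * a := by
          rw [Real.sqrt_mul (by positivity), Real.sqrt_sq ha.le]
      _ ≤ Real.sqrt ((Finset.univ.sup n : ℕ) : ℝ) * a := by
          gcongr
          exact_mod_cast Finset.le_sup (Finset.mem_univ i)
  have hM_ge : ∀ w ∈ Ω, ‖w‖ ≤ M := fun w hw => le_csSup hbdd ⟨w, hw, rfl⟩
  have hxiM : ∀ i : Fin s, ‖x i‖ ≤ M :=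
    fun i => (norm_le_pi_norm x i).trans (hM_ge x hx)
  have hM0 : (0:ℝ) ≤ M := (norm_nonneg x).trans (hM_ge x hx)
  have hγl0 : (0:ℝ) ≤ γ ((l : ℝ) + 1) := hγ_nonneg _ (by positivity)
  -- differentiability of f
  have hVd : Differentiable ℝ V := hV.differentiable one_ne_zero
  have hupd : Differentiable ℝ
      (fun w : (i : Fin s) → EuclideanSpace ℝ (Fin (n i)) => Function.update w j 0) := by
    refine differentiable_pi.mpr fun i => ?_
    by_cases hij : i = j
    · subst hij
      simp only [Function.update_self]
      exact differentiable_const _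
    · simp only [Function.update_of_ne hij]
      exact differentiable_pi.mp differentiable_id i
  have hfd : Differentiable ℝ f := hVd.sub (hVd.comp hupd)
  -- the segment stays in Ω
  have hseg : ∀ t ∈ Set.Icc (0:ℝ) 1, y + t • (z - y) ∈ Ω := by
    intro t ht
    rw [hΩ]
    intro i k
    have hval : (y + t • (z - y)) i k = y i k + t * (z i k - y i k) := rfl
    rw [hval]
    have h00 : (0 : EuclideanSpace ℝ (Fin (n i))) k = 0 := rfl
    by_cases h1 : (i : ℕ) < (j : ℕ)
    · rw [hyP i h1, hzP i h1, h00]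
      simpa using ha.le
    · rw [hyN i h1]
      by_cases h2 : d i j ≤ l
      · rw [hzN1 i h1 h2]
        have : x i k + t * (x i k - x i k) = x i k := by ring
        rw [this]
        exact hxΩ i k
      · rw [hzN2 i h1 h2, h00]
        have : x i k + t * (0 - x i k) = (1 - t) * x i k := by ring
        rw [this, abs_mul]
        have h1t : |1 - t| ≤ 1 := by
          rw [abs_le]; constructor <;> [linarith [ht.2]; linarith [ht.1]]
        calc |1 - t| * |x i k| ≤ 1 * a :=
              mul_le_mul h1t (hxΩ i k) (abs_nonneg _) zero_le_one
          _ = a := one_mul a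
  -- bound on the derivative applied to z - y, at any point of Ω
  have key : ∀ w ∈ Ω, ‖fderiv ℝ f w (z - y)‖ ≤ (s:ℝ) * M * γ ((l : ℝ) + 1) := by
    intro w hw
    have hdecomp : z - y = ∑ i, Pi.single i ((z - y) i) :=
      (Finset.univ_sum_single _).symm
    rw [hdecomp, map_sum]
    have hterm : ∀ i : Fin s, ‖fderiv ℝ f w (Pi.single i ((z - y) i))‖
        ≤ M * γ ((l : ℝ) + 1) := by
      intro i
      have hsub : (z - y) i = z i - y i := rfl
      by_cases h1 : (i : ℕ) < (j : ℕ)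
      · have : (z - y) i = 0 := by rw [hsub, hzP i h1, hyP i h1, sub_zero]
        rw [this]
        simp [mul_nonneg hM0 hγl0]
      · by_cases h2 : d i j ≤ l
        · have : (z - y) i = 0 := by rw [hsub, hzN1 i h1 h2, hyN i h1, sub_self]
          rw [this]
          simp [mul_nonneg hM0 hγl0]
        · -- here d i j ≥ l + 1, in particular i ≠ j
          have hdl : l + 1 ≤ d i j := Nat.succ_le_of_lt (not_le.mp h2)
          have hij : i ≠ j := by
            intro h; subst h
            rw [hd_refl i] at hdl; omega
          have hs := hsens i j hij w hw
          rw [← hfdef] at hs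
          have happ : fderiv ℝ f w (Pi.single i ((z - y) i))
              = ((fderiv ℝ f w).comp (LinearMap.toContinuousLinearMap
                  (LinearMap.single ℝ (fun i => EuclideanSpace ℝ (Fin (n i))) i)))
                ((z - y) i) := by
            simp [ContinuousLinearMap.comp_apply,
              LinearMap.coe_toContinuousLinearMap', LinearMap.coe_single]
          rw [happ]
          have hnv : ‖(z - y) i‖ ≤ M := by
            have : (z - y) i = -(x i) := by
              rw [hsub, hzN2 i h1 h2, hyN i h1, zero_sub]
            rw [this, norm_neg]
            exact hxiM i
          have hγle : γ (d i j) ≤ γ ((l : ℝ) + 1) := by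
            refine hγ_anti.antitoneOn (Set.mem_Ici.mpr (by positivity)) (Set.mem_Ici.mpr (by positivity)) ?_
            exact_mod_cast hdl
          calc ‖((fderiv ℝ f w).comp _) ((z - y) i)‖
              ≤ ‖(fderiv ℝ f w).comp (LinearMap.toContinuousLinearMap
                  (LinearMap.single ℝ (fun i => EuclideanSpace ℝ (Fin (n i))) i))‖
                * ‖(z - y) i‖ := ContinuousLinearMap.le_opNorm _ _
            _ ≤ γ (d i j) * ‖(z - y) i‖ :=
                mul_le_mul_of_nonneg_right hs (norm_nonneg _)
            _ ≤ γ ((l : ℝ) + 1) * M := by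
                refine mul_le_mul hγle hnv (norm_nonneg _) hγl0
            _ = M * γ ((l : ℝ) + 1) := mul_comm _ _
    calc ‖∑ i, fderiv ℝ f w (Pi.single i ((z - y) i))‖
        ≤ ∑ i, ‖fderiv ℝ f w (Pi.single i ((z - y) i))‖ := norm_sum_le _ _
      _ ≤ ∑ _i : Fin s, M * γ ((l : ℝ) + 1) := Finset.sum_le_sum fun i _ => hterm i
      _ = (s : ℝ) * (M * γ ((l : ℝ) + 1)) := by
          simp [Finset.sum_const, Finset.card_univ]
      _ = (s : ℝ) * M * γ ((l : ℝ) + 1) := (mul_assoc _ _ _).symm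
  -- mean value inequality along the segment
  have hderiv : ∀ t ∈ Set.Icc (0:ℝ) 1,
      HasDerivWithinAt (fun t : ℝ => f (y + t • (z - y)))
        (fderiv ℝ f (y + t • (z - y)) (z - y)) (Set.Icc 0 1) t := by
    intro t ht
    have h1 : HasDerivAt (fun t : ℝ => y + t • (z - y)) (z - y) t := by
      simpa using ((hasDerivAt_id t).smul_const (z - y)).const_add y
    exact ((hfd _).hasFDerivAt.comp_hasDerivAt t h1).hasDerivWithinAt
  have hmvt := norm_image_sub_le_of_norm_deriv_le_segment_01' hderiv
    (fun t ht => key _ (hseg t (Set.mem_Icc_of_Ico ht)))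
  have e1 : y + (1:ℝ) • (z - y) = z := by module
  have e0 : y + (0:ℝ) • (z - y) = y := by module
  rw [e1, e0, Real.norm_eq_abs] at hmvt
  exact hmvt
end

section
/- Let P be a symmetric s×s block matrix and for l ∈ {1,…,s} define the truncation P^l by P^l[i,j] = P[i,j] if d(i,j) ≤ l and 0 otherwise, where d is a symmetric distance on {1,…,s} with d(i,i) = 0. Let V(x) = xᵀPx. Define Ψ_l^j(x) = V(Π^{j-1} H^j x) - V(Π^j H^j x), where Π^j zeroes blocks 1,…,j and H^j zeroes all blocks i with d(i,j) > l. Then ∑_{j=1}^s Ψ_l^j(x) = xᵀ P^l x for all x. -/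
open scoped RealInnerProductSpace

/-- Lemma 2: for a symmetric block matrix `P` (blocks given as linear maps between
Euclidean blocks), the quadratic form `V(x) = xᵀPx`, and the functions
`Ψ_l^j(x) = V(Π^{j-1}H^j x) - V(Π^j H^j x)` (with `H^j` zeroing blocks `i` with
`d(i,j) > l` and `Π^j` zeroing blocks `1,…,j`), one has
`∑_j Ψ_l^j(x) = xᵀ P^l x`, where `P^l` is the distance-`l` truncation of `P`. -/
theorem stmt_7 {s : ℕ} {n : Fin s → ℕ}
    (P : (i j : Fin s) → EuclideanSpace ℝ (Fin (n j)) →L[ℝ] EuclideanSpace ℝ (Fin (n i)))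
    (hP_symm : ∀ i j, ContinuousLinearMap.adjoint (P i j) = P j i)
    (d : Fin s → Fin s → ℕ)
    (hd_refl : ∀ i, d i i = 0) (hd_symm : ∀ i j, d i j = d j i)
    (l : ℕ)
    (V : ((i : Fin s) → EuclideanSpace ℝ (Fin (n i))) → ℝ)
    (hV : ∀ x, V x = ∑ i : Fin s, ∑ j : Fin s, ⟪x i, P i j (x j)⟫) :
    ∀ x : (i : Fin s) → EuclideanSpace ℝ (Fin (n i)),
      ∑ j : Fin s,
        (V (fun i => if (i : ℕ) < (j : ℕ) then 0 else if d i j ≤ l then x i else 0)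
          - V (fun i => if (i : ℕ) < (j : ℕ) + 1 then 0 else if d i j ≤ l then x i else 0))
      = ∑ i : Fin s, ∑ j : Fin s, ⟪x i, (if d i j ≤ l then P i j (x j) else 0)⟫ := by
  intro x
  simp only [hV]
  have key : ∀ (a b j : Fin s) (m : ℕ),
      ⟪(if (a : ℕ) < m then 0 else if d a j ≤ l then x a else 0 :
          EuclideanSpace ℝ (Fin (n a))),
        P a b (if (b : ℕ) < m then 0 else if d b j ≤ l then x b else 0)⟫
      = if (m ≤ (a : ℕ) ∧ d a j ≤ l) ∧ (m ≤ (b : ℕ) ∧ d b j ≤ l)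
          then ⟪x a, P a b (x b)⟫ else 0 := by
    intro a b j m
    by_cases ha1 : (a : ℕ) < m
    · have hneg : ¬((m ≤ (a : ℕ) ∧ d a j ≤ l) ∧ (m ≤ (b : ℕ) ∧ d b j ≤ l)) :=
        fun h => absurd h.1.1 (by omega)
      rw [if_pos ha1, if_neg hneg]
      simp
    · rw [if_neg ha1]
      by_cases hb1 : (b : ℕ) < m
      · have hneg : ¬((m ≤ (a : ℕ) ∧ d a j ≤ l) ∧ (m ≤ (b : ℕ) ∧ d b j ≤ l)) :=
          fun h => absurd h.2.1 (by omega)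
        rw [if_pos hb1, if_neg hneg]
        simp
      · rw [if_neg hb1]
        by_cases ha2 : d a j ≤ l
        · rw [if_pos ha2]
          by_cases hb2 : d b j ≤ l
          · rw [if_pos hb2, if_pos ⟨⟨by omega, ha2⟩, by omega, hb2⟩]
          · have hneg : ¬((m ≤ (a : ℕ) ∧ d a j ≤ l) ∧ (m ≤ (b : ℕ) ∧ d b j ≤ l)) :=
              fun h => hb2 h.2.2
            rw [if_neg hb2, if_neg hneg]
            simp
        · have hneg : ¬((m ≤ (a : ℕ) ∧ d a j ≤ l) ∧ (m ≤ (b : ℕ) ∧ d b j ≤ l)) :=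
            fun h => ha2 h.1.2
          rw [if_neg ha2, if_neg hneg]
          simp
  simp only [key]
  simp only [← Finset.sum_sub_distrib]
  rw [Finset.sum_comm]
  refine Finset.sum_congr rfl fun a _ => ?_
  rw [Finset.sum_comm]
  refine Finset.sum_congr rfl fun b _ => ?_
  clear hV hP_symm key
  rcases le_or_gt (a : ℕ) (b : ℕ) with hab | hab
  · rw [Finset.sum_eq_single a]
    · rw [hd_refl a, hd_symm b a]
      split_ifs <;> simp_all <;> omega
    · intro j _ hj
      have hj' : (j : ℕ) ≠ (a : ℕ) := fun h => hj (Fin.ext h)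
      split_ifs <;> simp_all <;> omega
    · simp
  · rw [Finset.sum_eq_single b]
    · rw [hd_refl b]
      split_ifs <;> simp_all <;> omega
    · intro j _ hj
      have hj' : (j : ℕ) ≠ (b : ℕ) := fun h => hj (Fin.ext h)
      split_ifs <;> simp_all <;> omega
    · simp
end

section
/- Let P be a symmetric s×s block matrix (blocks of sizes n_i × n_j) over ℝ such that ‖P[i,j]‖ ≤ C ρ^{d(i,j)} for all i,j, where C ≥ 0, ρ ∈ (0,1), and d is a distance on {1,…,s}. Let P^l be the truncation keeping only blocks with d(i,j) ≤ l. Then for any x, |xᵀPx − xᵀP^l x| ≤ C ρ^{l+1} (∑_i ‖x_i‖)². -/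
open scoped RealInnerProductSpace

/-- SED truncation error for quadratic forms: if the blocks of the symmetric block
matrix `P` satisfy `‖P[i,j]‖ ≤ C ρ^{d(i,j)}` (operator norm), then the quadratic form
of the truncation `P^l` (keeping blocks with `d(i,j) ≤ l`) satisfies
`|xᵀPx − xᵀP^l x| ≤ C ρ^{l+1} (∑_i ‖x_i‖)²`. -/
theorem stmt_8 {s : ℕ} {n : Fin s → ℕ}
    (P : (i j : Fin s) → EuclideanSpace ℝ (Fin (n j)) →L[ℝ] EuclideanSpace ℝ (Fin (n i)))
    (hP_symm : ∀ i j, ContinuousLinearMap.adjoint (P i j) = P j i)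
    (d : Fin s → Fin s → ℕ)
    (hd_refl : ∀ i, d i i = 0) (hd_symm : ∀ i j, d i j = d j i)
    (hd_tri : ∀ i j k, d i k ≤ d i j + d j k)
    (C ρ : ℝ) (hC : 0 ≤ C) (hρ : ρ ∈ Set.Ioo (0 : ℝ) 1)
    (hSED : ∀ i j, ‖P i j‖ ≤ C * ρ ^ (d i j)) (l : ℕ) :
    ∀ x : (i : Fin s) → EuclideanSpace ℝ (Fin (n i)),
      |(∑ i : Fin s, ∑ j : Fin s, ⟪x i, P i j (x j)⟫)
        - ∑ i : Fin s, ∑ j : Fin s, ⟪x i, (if d i j ≤ l then P i j (x j) else 0)⟫|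
      ≤ C * ρ ^ (l + 1) * (∑ i : Fin s, ‖x i‖) ^ 2 := by
  intro x
  have hρ0 : (0:ℝ) ≤ ρ := hρ.1.le
  have hρ1 : ρ ≤ 1 := hρ.2.le
  have key : ∀ i j : Fin s,
      |⟪x i, P i j (x j)⟫ - ⟪x i, (if d i j ≤ l then P i j (x j) else 0)⟫|
      ≤ C * ρ ^ (l + 1) * (‖x i‖ * ‖x j‖) := by
    intro i j
    by_cases h : d i j ≤ l
    · simp only [if_pos h, sub_self, abs_zero]
      positivity
    · rw [if_neg h, inner_zero_right, sub_zero]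
      have h1 : |⟪x i, P i j (x j)⟫| ≤ ‖x i‖ * (‖P i j‖ * ‖x j‖) := by
        calc |⟪x i, P i j (x j)⟫| ≤ ‖x i‖ * ‖P i j (x j)‖ := abs_real_inner_le_norm _ _
        _ ≤ ‖x i‖ * (‖P i j‖ * ‖x j‖) := by
              exact mul_le_mul_of_nonneg_left ((P i j).le_opNorm _) (norm_nonneg _)
      have h2 : ‖P i j‖ ≤ C * ρ ^ (l + 1) := by
        refine (hSED i j).trans ?_
        refine mul_le_mul_of_nonneg_left ?_ hC
        exact pow_le_pow_of_le_one hρ0 hρ1 (Nat.succ_le_of_lt (Nat.lt_of_not_le h))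
      calc |⟪x i, P i j (x j)⟫| ≤ ‖x i‖ * (‖P i j‖ * ‖x j‖) := h1
      _ ≤ ‖x i‖ * (C * ρ ^ (l + 1) * ‖x j‖) := by
            refine mul_le_mul_of_nonneg_left ?_ (norm_nonneg _)
            exact mul_le_mul_of_nonneg_right h2 (norm_nonneg _)
      _ = C * ρ ^ (l + 1) * (‖x i‖ * ‖x j‖) := by ring
  calc |(∑ i : Fin s, ∑ j : Fin s, ⟪x i, P i j (x j)⟫)
        - ∑ i : Fin s, ∑ j : Fin s, ⟪x i, (if d i j ≤ l then P i j (x j) else 0)⟫|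
      = |∑ i : Fin s, ∑ j : Fin s,
          (⟪x i, P i j (x j)⟫ - ⟪x i, (if d i j ≤ l then P i j (x j) else 0)⟫)| := by
        rw [← Finset.sum_sub_distrib]
        congr 1
        exact Finset.sum_congr rfl fun i _ => (Finset.sum_sub_distrib _ _).symm
    _ ≤ ∑ i : Fin s, ∑ j : Fin s,
          |⟪x i, P i j (x j)⟫ - ⟪x i, (if d i j ≤ l then P i j (x j) else 0)⟫| := by
        refine (Finset.abs_sum_le_sum_abs _ _).trans ?_
        exact Finset.sum_le_sum fun i _ => Finset.abs_sum_le_sum_abs _ _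
    _ ≤ ∑ i : Fin s, ∑ j : Fin s, C * ρ ^ (l + 1) * (‖x i‖ * ‖x j‖) :=
        Finset.sum_le_sum fun i _ => Finset.sum_le_sum fun j _ => key i j
    _ = C * ρ ^ (l + 1) * (∑ i : Fin s, ‖x i‖) ^ 2 := by
        rw [sq, Finset.sum_mul_sum]
        rw [Finset.mul_sum]
        exact Finset.sum_congr rfl fun i _ => by rw [Finset.mul_sum]
end

section
/- Let D and A_cl be s×s block matrices, σ ∈ (0,1), and suppose ‖A_cl^k[r,i]‖ ≤ C₁ ρ^{|r−i|} σ^{k−1} for k ≥ 1, ‖A_cl^0[r,i]‖ ≤ δ_{ri} (identity), and ‖D[r,p]‖ ≤ C_D ρ^{α|r−p|} for some α ∈ (0,1]. If the series P = ∑_{k=0}^∞ (A_cl^k)ᵀ D A_cl^k converges blockwise, then ‖P[i,j]‖ ≤ C_D ρ^{α|i−j|} + (C₁² C_D / (1−σ²)) ∑_{r,p=1}^s ρ^{|r−i| + α|r−p| + |p−j|}. -/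
/-- Powers of an `s×s` block matrix (blocks are operators on `ℝ^m`). -/
noncomputable def blockPow {s m : ℕ}
    (A : Fin s → Fin s → (EuclideanSpace ℝ (Fin m) →L[ℝ] EuclideanSpace ℝ (Fin m))) :
    ℕ → Fin s → Fin s → (EuclideanSpace ℝ (Fin m) →L[ℝ] EuclideanSpace ℝ (Fin m))
  | 0 => fun i j => if i = j then ContinuousLinearMap.id ℝ _ else 0
  | (k + 1) => fun i j => ∑ r : Fin s, (A i r).comp (blockPow A k r j)

/-- Core estimate of Proposition 1: if the powers of the closed loop satisfy
`‖A_cl^k[r,i]‖ ≤ C₁ ρ^{|r−i|} σ^{k−1}` and `‖D[r,p]‖ ≤ C_D ρ^{α|r−p|}`, and the series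
`P = ∑_k (A_cl^k)ᵀ D A_cl^k` converges blockwise, then
`‖P[i,j]‖ ≤ C_D ρ^{α|i−j|} + (C₁² C_D/(1−σ²)) ∑_{r,p} ρ^{|r−i|+α|r−p|+|p−j|}`. -/
theorem stmt_14 {s m : ℕ}
    (Acl D : Fin s → Fin s → (EuclideanSpace ℝ (Fin m) →L[ℝ] EuclideanSpace ℝ (Fin m)))
    (σ ρ α C₁ C_D : ℝ) (hσ : σ ∈ Set.Ioo (0 : ℝ) 1) (hρ : ρ ∈ Set.Ioo (0 : ℝ) 1)
    (hα : α ∈ Set.Ioc (0 : ℝ) 1) (hC₁ : 0 ≤ C₁) (hCD : 0 ≤ C_D)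
    (hApow : ∀ (k : ℕ), 1 ≤ k → ∀ r i : Fin s,
      ‖blockPow Acl k r i‖ ≤ C₁ * ρ ^ ((Nat.dist (r : ℕ) (i : ℕ) : ℝ)) * σ ^ (k - 1))
    (hD : ∀ r p : Fin s, ‖D r p‖ ≤ C_D * ρ ^ (α * (Nat.dist (r : ℕ) (p : ℕ) : ℝ)))
    (P : Fin s → Fin s → (EuclideanSpace ℝ (Fin m) →L[ℝ] EuclideanSpace ℝ (Fin m)))
    (hP : ∀ i j : Fin s,
      HasSum (fun k : ℕ => ∑ r : Fin s, ∑ p : Fin s,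
        (ContinuousLinearMap.adjoint (blockPow Acl k r i)).comp
          ((D r p).comp (blockPow Acl k p j))) (P i j)) :
    ∀ i j : Fin s,
      ‖P i j‖ ≤ C_D * ρ ^ (α * (Nat.dist (i : ℕ) (j : ℕ) : ℝ))
        + (C₁ ^ 2 * C_D / (1 - σ ^ 2))
          * ∑ r : Fin s, ∑ p : Fin s,
              ρ ^ ((Nat.dist (r : ℕ) (i : ℕ) : ℝ)
                + α * (Nat.dist (r : ℕ) (p : ℕ) : ℝ)
                + (Nat.dist (p : ℕ) (j : ℕ) : ℝ)) := by
  intro i j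
  obtain ⟨hσ0, hσ1⟩ := hσ
  obtain ⟨hρ0, hρ1⟩ := hρ
  set f : ℕ → (EuclideanSpace ℝ (Fin m) →L[ℝ] EuclideanSpace ℝ (Fin m)) :=
    fun k => ∑ r : Fin s, ∑ p : Fin s,
      (ContinuousLinearMap.adjoint (blockPow Acl k r i)).comp
        ((D r p).comp (blockPow Acl k p j)) with hf
  have hPf : HasSum f (P i j) := hP i j
  set S : ℝ := ∑ r : Fin s, ∑ p : Fin s,
      ρ ^ ((Nat.dist (r : ℕ) (i : ℕ) : ℝ) + α * (Nat.dist (r : ℕ) (p : ℕ) : ℝ)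
        + (Nat.dist (p : ℕ) (j : ℕ) : ℝ)) with hS
  set K : ℝ := C₁ ^ 2 * C_D * S with hK
  set g : ℕ → ℝ := fun k =>
    if k = 0 then C_D * ρ ^ (α * (Nat.dist (i : ℕ) (j : ℕ) : ℝ)) else K * (σ ^ 2) ^ (k - 1)
    with hg
  have h0 : f 0 = D i j := by
    rw [hf]
    show (∑ r : Fin s, ∑ p : Fin s,
      (ContinuousLinearMap.adjoint
        (if r = i then ContinuousLinearMap.id ℝ _ else 0)).comp
        ((D r p).comp (if p = j then ContinuousLinearMap.id ℝ _ else 0))) = D i j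
    rw [Finset.sum_eq_single i]
    · rw [Finset.sum_eq_single j]
      · simp [ContinuousLinearMap.adjoint_id]
      · intro p _ hp; simp [hp]
      · intro h; exact absurd (Finset.mem_univ j) h
    · intro r _ hr; simp [hr]
    · intro h; exact absurd (Finset.mem_univ i) h
  have hbound : ∀ k, ‖f k‖ ≤ g k := by
    intro k
    cases k with
    | zero =>
      rw [h0]
      have := hD i j
      simp only [hg, if_pos rfl]
      exact this
    | succ n =>
      have h1 : 1 ≤ n + 1 := Nat.le_add_left 1 n
      have hterm : ∀ r p : Fin s,
          ‖(ContinuousLinearMap.adjoint (blockPow Acl (n+1) r i)).comp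
              ((D r p).comp (blockPow Acl (n+1) p j))‖
            ≤ C₁ ^ 2 * C_D * (σ ^ 2) ^ n *
              ρ ^ ((Nat.dist (r : ℕ) (i : ℕ) : ℝ) + α * (Nat.dist (r : ℕ) (p : ℕ) : ℝ)
                + (Nat.dist (p : ℕ) (j : ℕ) : ℝ)) := by
        intro r p
        have ha := hApow (n+1) h1 r i
        have hc := hApow (n+1) h1 p j
        have hb := hD r p
        simp only [Nat.add_sub_cancel] at ha hc
        calc ‖(ContinuousLinearMap.adjoint (blockPow Acl (n+1) r i)).comp
              ((D r p).comp (blockPow Acl (n+1) p j))‖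
            ≤ ‖ContinuousLinearMap.adjoint (blockPow Acl (n+1) r i)‖ *
                ‖(D r p).comp (blockPow Acl (n+1) p j)‖ :=
              ContinuousLinearMap.opNorm_comp_le _ _
          _ ≤ ‖ContinuousLinearMap.adjoint (blockPow Acl (n+1) r i)‖ *
                (‖D r p‖ * ‖blockPow Acl (n+1) p j‖) := by
              gcongr
              exact ContinuousLinearMap.opNorm_comp_le _ _
          _ = ‖blockPow Acl (n+1) r i‖ * (‖D r p‖ * ‖blockPow Acl (n+1) p j‖) := by
              rw [ContinuousLinearMap.adjoint.norm_map]
          _ ≤ (C₁ * ρ ^ ((Nat.dist (r : ℕ) (i : ℕ) : ℝ)) * σ ^ n) *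
                ((C_D * ρ ^ (α * (Nat.dist (r : ℕ) (p : ℕ) : ℝ))) *
                  (C₁ * ρ ^ ((Nat.dist (p : ℕ) (j : ℕ) : ℝ)) * σ ^ n)) := by
              gcongr <;> positivity
          _ = C₁ ^ 2 * C_D * (σ ^ 2) ^ n *
              ρ ^ ((Nat.dist (r : ℕ) (i : ℕ) : ℝ) + α * (Nat.dist (r : ℕ) (p : ℕ) : ℝ)
                + (Nat.dist (p : ℕ) (j : ℕ) : ℝ)) := by
              rw [Real.rpow_add hρ0, Real.rpow_add hρ0]
              ring
      have : ‖f (n+1)‖ ≤ K * (σ ^ 2) ^ n := by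
        calc ‖f (n+1)‖ ≤ ∑ r : Fin s, ∑ p : Fin s,
              ‖(ContinuousLinearMap.adjoint (blockPow Acl (n+1) r i)).comp
                ((D r p).comp (blockPow Acl (n+1) p j))‖ := by
              refine (norm_sum_le _ _).trans ?_
              exact Finset.sum_le_sum fun r _ => norm_sum_le _ _
          _ ≤ ∑ r : Fin s, ∑ p : Fin s, C₁ ^ 2 * C_D * (σ ^ 2) ^ n *
              ρ ^ ((Nat.dist (r : ℕ) (i : ℕ) : ℝ) + α * (Nat.dist (r : ℕ) (p : ℕ) : ℝ)
                + (Nat.dist (p : ℕ) (j : ℕ) : ℝ)) := by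
              exact Finset.sum_le_sum fun r _ => Finset.sum_le_sum fun p _ => hterm r p
          _ = K * (σ ^ 2) ^ n := by
              simp only [← Finset.mul_sum]
              rw [hK, hS]
              ring
      simp only [hg, if_neg (Nat.succ_ne_zero n), Nat.add_sub_cancel]
      exact this
  have h2 : σ ^ 2 < 1 := by nlinarith
  have hgeo : HasSum (fun n : ℕ => K * (σ ^ 2) ^ n) (K * (1 - σ ^ 2)⁻¹) :=
    (hasSum_geometric_of_lt_one (by positivity) h2).mul_left K
  have hg1 : (fun n : ℕ => g (n + 1)) = fun n : ℕ => K * (σ ^ 2) ^ n := by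
    funext n; simp [hg]
  have hgsum : HasSum g (K * (1 - σ ^ 2)⁻¹ + C_D * ρ ^ (α * (Nat.dist (i : ℕ) (j : ℕ) : ℝ))) := by
    have := (hasSum_nat_add_iff (f := g) 1).mp (by rw [hg1]; exact hgeo)
    simpa [hg, Finset.sum_range_one] using this
  have hsumnorm : Summable fun k => ‖f k‖ :=
    Summable.of_nonneg_of_le (fun _ => norm_nonneg _) hbound hgsum.summable
  calc ‖P i j‖ = ‖∑' k, f k‖ := by rw [hPf.tsum_eq]
    _ ≤ ∑' k, ‖f k‖ := norm_tsum_le_tsum_norm hsumnorm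
    _ ≤ ∑' k, g k := Summable.tsum_le_tsum hbound hsumnorm hgsum.summable
    _ = K * (1 - σ ^ 2)⁻¹ + C_D * ρ ^ (α * (Nat.dist (i : ℕ) (j : ℕ) : ℝ)) := hgsum.tsum_eq
    _ = C_D * ρ ^ (α * (Nat.dist (i : ℕ) (j : ℕ) : ℝ)) + (C₁ ^ 2 * C_D / (1 - σ ^ 2)) * S := by
        rw [hK]; ring
end

section
/- Let ρ ∈ (0,1) and 0 < β < α < 1. Then sup over s ∈ ℕ and i,j ∈ {1,…,s} of C₂(α,β,s,i,j) = ∑_{r,p=1}^s ρ^{|r−i| + α|r−p| + |p−j| − β|i−j|} is finite. -/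
private lemma geom_range_le (σ : ℝ) (h0 : 0 ≤ σ) (h1 : σ < 1) (n : ℕ) :
    ∑ k ∈ Finset.range n, σ ^ k ≤ 1 / (1 - σ) := by
  have hsum := Summable.sum_le_tsum (Finset.range n) (fun k _ => pow_nonneg h0 k)
    (summable_geometric_of_lt_one h0 h1)
  rwa [tsum_geometric_of_lt_one h0 h1, ← one_div] at hsum

private lemma one_sided (σ : ℝ) (h0 : 0 ≤ σ) (h1 : σ < 1) (F : Finset ℕ)
    (f : ℕ → ℕ) (hinj : Set.InjOn f F) :
    ∑ r ∈ F, σ ^ f r ≤ 1 / (1 - σ) := by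
  classical
  rw [show ∑ r ∈ F, σ ^ f r = ∑ k ∈ F.image f, σ ^ k from
    (Finset.sum_image (fun x hx y hy h => hinj hx hy h)).symm]
  calc ∑ k ∈ F.image f, σ ^ k
      ≤ ∑ k ∈ Finset.range ((F.image f).sup id + 1), σ ^ k := by
        apply Finset.sum_le_sum_of_subset_of_nonneg
        · intro k hk
          simp only [Finset.mem_range]
          exact Nat.lt_succ_of_le (Finset.le_sup (f := id) hk)
        · intro k _ _; exact pow_nonneg h0 k
    _ ≤ 1 / (1 - σ) := geom_range_le σ h0 h1 _

private lemma abs_sum_le (σ : ℝ) (h0 : 0 < σ) (h1 : σ < 1) (i s : ℕ) :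
    ∑ r ∈ Finset.Icc 1 s, σ ^ |(r : ℝ) - i| ≤ 2 / (1 - σ) := by
  classical
  have key : ∀ r : ℕ, σ ^ |(r : ℝ) - i|
      = if r ≤ i then σ ^ (i - r : ℕ) else σ ^ (r - i : ℕ) := by
    intro r
    split_ifs with h
    · rw [← Real.rpow_natCast σ (i - r)]
      congr 1
      rw [abs_sub_comm, abs_of_nonneg (by exact sub_nonneg.2 (by exact_mod_cast h))]
      push_cast [Nat.cast_sub h]
      ring
    · push_neg at h
      rw [← Real.rpow_natCast σ (r - i)]
      congr 1
      rw [abs_of_nonneg (by exact sub_nonneg.2 (by exact_mod_cast h.le))]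
      push_cast [Nat.cast_sub h.le]
      ring
  rw [Finset.sum_congr rfl (fun r _ => key r)]
  rw [Finset.sum_ite]
  have hle : 0 ≤ σ := h0.le
  have b1 : ∑ r ∈ (Finset.Icc 1 s).filter (fun r => r ≤ i), σ ^ (i - r : ℕ)
      ≤ 1 / (1 - σ) := by
    apply one_sided σ hle h1
    intro x hx y hy hxy
    simp only [Finset.coe_filter, Set.mem_setOf_eq] at hx hy
    have hxy' : i - x = i - y := hxy
    omega
  have b2 : ∑ r ∈ (Finset.Icc 1 s).filter (fun r => ¬ r ≤ i), σ ^ (r - i : ℕ)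
      ≤ 1 / (1 - σ) := by
    apply one_sided σ hle h1
    intro x hx y hy hxy
    simp only [Finset.coe_filter, Set.mem_setOf_eq] at hx hy
    have hxy' : x - i = y - i := hxy
    omega
  have : (2 : ℝ) / (1 - σ) = 1 / (1 - σ) + 1 / (1 - σ) := by ring
  rw [this]
  exact add_le_add b1 b2

/-- Uniform boundedness (in the number of subsystems `s` and in `i`, `j`) of
`C₂(α,β,s,i,j) = ∑_{r,p=1}^s ρ^{|r−i| + α|r−p| + |p−j| − β|i−j|}` for
`ρ ∈ (0,1)` and `0 < β < α < 1`. -/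
theorem stmt_16 (ρ α β : ℝ) (hρ : ρ ∈ Set.Ioo (0 : ℝ) 1)
    (hβ : 0 < β) (hβα : β < α) (hα : α < 1) :
    ∃ M : ℝ, ∀ (s i j : ℕ), i ∈ Finset.Icc 1 s → j ∈ Finset.Icc 1 s →
      ∑ r ∈ Finset.Icc 1 s, ∑ p ∈ Finset.Icc 1 s,
        ρ ^ (|(r : ℝ) - i| + α * |(r : ℝ) - p| + |(p : ℝ) - j| - β * |(i : ℝ) - j|)
      ≤ M := by
  obtain ⟨hρ0, hρ1⟩ := hρ
  set σ : ℝ := ρ ^ (1 - β) with hσdef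
  have hσ0 : 0 < σ := Real.rpow_pos_of_pos hρ0 _
  have hσ1 : σ < 1 := Real.rpow_lt_one hρ0.le hρ1 (by linarith)
  refine ⟨(2 / (1 - σ)) * (2 / (1 - σ)), fun s i j _ _ => ?_⟩
  have step1 : ∀ r p : ℕ,
      ρ ^ (|(r : ℝ) - i| + α * |(r : ℝ) - p| + |(p : ℝ) - j| - β * |(i : ℝ) - j|)
      ≤ σ ^ |(r : ℝ) - i| * σ ^ |(p : ℝ) - j| := by
    intro r p
    have habs : |(i : ℝ) - j| ≤ |(r : ℝ) - i| + |(r : ℝ) - p| + |(p : ℝ) - j| := by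
      have t1 : |(i : ℝ) - j| ≤ |(i : ℝ) - r| + |(r : ℝ) - p| + |(p : ℝ) - j| := by
        calc |(i : ℝ) - j| ≤ |(i : ℝ) - p| + |(p : ℝ) - j| := abs_sub_le _ _ _
          _ ≤ (|(i : ℝ) - r| + |(r : ℝ) - p|) + |(p : ℝ) - j| :=
            add_le_add_left (abs_sub_le _ _ _) _
      rwa [abs_sub_comm (i : ℝ) r] at t1
    have hexp : (1 - β) * (|(r : ℝ) - i| + |(p : ℝ) - j|)
        ≤ |(r : ℝ) - i| + α * |(r : ℝ) - p| + |(p : ℝ) - j| - β * |(i : ℝ) - j| := by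
      have h1 : 0 ≤ |(r : ℝ) - p| := abs_nonneg _
      nlinarith
    calc ρ ^ (|(r : ℝ) - i| + α * |(r : ℝ) - p| + |(p : ℝ) - j| - β * |(i : ℝ) - j|)
        ≤ ρ ^ ((1 - β) * (|(r : ℝ) - i| + |(p : ℝ) - j|)) :=
          Real.rpow_le_rpow_of_exponent_ge hρ0 hρ1.le hexp
      _ = σ ^ |(r : ℝ) - i| * σ ^ |(p : ℝ) - j| := by
          rw [hσdef, ← Real.rpow_mul hρ0.le, ← Real.rpow_mul hρ0.le,
            ← Real.rpow_add hρ0]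
          congr 1
          ring
  calc ∑ r ∈ Finset.Icc 1 s, ∑ p ∈ Finset.Icc 1 s,
        ρ ^ (|(r : ℝ) - i| + α * |(r : ℝ) - p| + |(p : ℝ) - j| - β * |(i : ℝ) - j|)
      ≤ ∑ r ∈ Finset.Icc 1 s, ∑ p ∈ Finset.Icc 1 s,
          σ ^ |(r : ℝ) - i| * σ ^ |(p : ℝ) - j| :=
        Finset.sum_le_sum fun r _ => Finset.sum_le_sum fun p _ => step1 r p
    _ = (∑ r ∈ Finset.Icc 1 s, σ ^ |(r : ℝ) - i|)
        * (∑ p ∈ Finset.Icc 1 s, σ ^ |(p : ℝ) - j|) := by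
        rw [Finset.sum_mul_sum]
    _ ≤ (2 / (1 - σ)) * (2 / (1 - σ)) := by
        apply mul_le_mul (abs_sum_le σ hσ0 hσ1 i s) (abs_sum_le σ hσ0 hσ1 j s)
        · exact Finset.sum_nonneg fun p _ => Real.rpow_nonneg hσ0.le _
        · have h1σ : (0:ℝ) < 1 - σ := by linarith
          positivity
end
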